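/- arXiv:0905.2375 — 2 statements merged into one kernel-verified Lean document; each statement's English description precedes it below -/
import Mathlib

section
/- Let n ≥ 1, T > 0, let γ : [0,T] → ℝⁿ be continuously differentiable, let h : ℝⁿ → ℝⁿ be continuous, and let w : [0,T] → ℝ be continuously differentiable with w'(t) = w(t) ⟨h(γ(t)), γ'(t)⟩ for all t ∈ [0,T]. Let ψ : ℝⁿ → ℝ be continuously differentiable with ψ(γ(0)) = ψ(γ(T)) = 0. Then ∫_0^T w(t) ( ψ(γ(t)) ⟨h(γ(t)), γ'(t)⟩ + ⟨∇ψ(γ(t)), γ'(t)⟩ ) dt = 0. -/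
open RealInnerProductSpace

/-! The integrand is the derivative of `t ↦ w t * ψ (γ t)`: the product rule gives
`w' (ψ ∘ γ) + w ⟪∇ψ(γ), γ'⟫`, and condition (econd) turns `w'` into `w ⟪h(γ), γ'⟫`.
The fundamental theorem of calculus and `ψ (γ 0) = ψ (γ T) = 0` finish the proof. -/

theorem deriv_mul_comp_eq {E : Type*} [NormedAddCommGroup E] [InnerProductSpace ℝ E]
    [CompleteSpace E] {w : ℝ → ℝ} {γ : ℝ → E} {ψ : E → ℝ} {t : ℝ}
    (hw : DifferentiableAt ℝ w t) (hγ : DifferentiableAt ℝ γ t)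
    (hψ : DifferentiableAt ℝ ψ (γ t)) :
    deriv (fun t => w t * ψ (γ t)) t =
      deriv w t * ψ (γ t) + w t * ⟪gradient ψ (γ t), deriv γ t⟫ := by
  rw [inner_gradient_left]
  exact (hw.hasDerivAt.mul (hψ.hasFDerivAt.comp_hasDerivAt t hγ.hasDerivAt)).deriv

theorem stmt_5_general (n : ℕ) (T : ℝ) (hT : 0 < T)
    (γ : ℝ → EuclideanSpace ℝ (Fin n)) (hγ : ContDiff ℝ 1 γ)
    (h : EuclideanSpace ℝ (Fin n) → EuclideanSpace ℝ (Fin n))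
    (w : ℝ → ℝ) (hw : ContDiff ℝ 1 w)
    (hw' : ∀ t ∈ Set.Icc (0 : ℝ) T, deriv w t = w t * ⟪h (γ t), deriv γ t⟫)
    (ψ : EuclideanSpace ℝ (Fin n) → ℝ) (hψ : ContDiff ℝ 1 ψ)
    (h0 : ψ (γ 0) = 0) (hT' : ψ (γ T) = 0) :
    ∫ t in (0 : ℝ)..T,
      w t * (ψ (γ t) * ⟪h (γ t), deriv γ t⟫ + ⟪gradient ψ (γ t), deriv γ t⟫) = 0 := by
  have hF : ContDiff ℝ 1 fun t => w t * ψ (γ t) := hw.mul (hψ.comp hγ)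
  have hderiv : ∀ t ∈ Set.uIcc (0 : ℝ) T,
      w t * (ψ (γ t) * ⟪h (γ t), deriv γ t⟫ + ⟪gradient ψ (γ t), deriv γ t⟫) =
        deriv (fun t => w t * ψ (γ t)) t := by
    intro t ht
    rw [deriv_mul_comp_eq (hw.differentiable one_ne_zero t) (hγ.differentiable one_ne_zero t)
      (hψ.differentiable one_ne_zero _), hw' t (Set.uIcc_of_le hT.le ▸ ht)]
    ring
  rw [intervalIntegral.integral_congr hderiv,
    intervalIntegral.integral_deriv_of_contDiffOn_Icc hF.contDiffOn hT.le, h0, hT']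
  ring

/-- If the logarithmic derivative of the weight `w` along the curve `γ`
equals `⟨h(γ(t)), γ'(t)⟩` for a fixed covector field `h` (condition (econd) of the paper),
then the field `ψ h + dψ` integrates to zero along the curve against the weight `w`,
for any `C¹` function `ψ` vanishing at the endpoints. -/
theorem stmt_5 (n : ℕ) (hn : 1 ≤ n) (T : ℝ) (hT : 0 < T)
    (γ : ℝ → EuclideanSpace ℝ (Fin n)) (hγ : ContDiff ℝ 1 γ)
    (h : EuclideanSpace ℝ (Fin n) → EuclideanSpace ℝ (Fin n)) (hh : Continuous h)
    (w : ℝ → ℝ) (hw : ContDiff ℝ 1 w)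
    (hw' : ∀ t ∈ Set.Icc (0 : ℝ) T, deriv w t = w t * ⟪h (γ t), deriv γ t⟫)
    (ψ : EuclideanSpace ℝ (Fin n) → ℝ) (hψ : ContDiff ℝ 1 ψ)
    (h0 : ψ (γ 0) = 0) (hT' : ψ (γ T) = 0) :
    ∫ t in (0 : ℝ)..T,
      w t * (ψ (γ t) * ⟪h (γ t), deriv γ t⟫ + ⟪gradient ψ (γ t), deriv γ t⟫) = 0 :=
  stmt_5_general n T hT γ hγ h w hw hw' ψ hψ h0 hT'
end

section
/- Let n ≥ 2 and let ξ ∈ ℝⁿ with ξ ≠ 0. Let θ₁, …, θ_{n−1} be a basis of the hyperplane ξ^⊥ = {v ∈ ℝⁿ : ⟨v, ξ⟩ = 0}, let μ₁, …, μ_{n−1} ∈ ℝ, and set θₙ = Σ_{j=1}^{n−1} μ_j θ_j. Let w₁, …, wₙ ∈ ℝ be nonzero scalars and a₁, …, aₙ ∈ ℝ scalars satisfying aₙ / wₙ ≠ Σ_{j=1}^{n−1} μ_j a_j / w_j. If f ∈ ℝⁿ and φ ∈ ℝ satisfy ⟨f, ξ⟩ = 0 and w_i ⟨f, θ_i⟩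 + a_i φ = 0 for every i = 1, …, n, then f = 0 and φ = 0. -/
open RealInnerProductSpace

/-!
Solving the first `n - 1` equations gives `⟨f, θ_j⟩ = -(a_j / w_j) φ`; substituting into the
last one leaves `(aₙ / wₙ - Σ μ_j a_j / w_j) φ = 0`, so `φ = 0` and `f` is orthogonal to every
`θ_j`. Then `f ∈ (ξ^⊥)^⊥ = ℝ ξ`, which together with `⟨f, ξ⟩ = 0` forces `f = 0`.
-/

theorem eq_zero_of_forall_mul_add_mul_eq_zero {ι K : Type*} [Fintype ι] [Field K]
    {w a μ x : ι → K} {wN aN φ : K} (hw : ∀ j, w j ≠ 0) (hwN : wN ≠ 0)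
    (hcond : aN / wN ≠ ∑ j, μ j * (a j / w j))
    (heq : ∀ j, w j * x j + a j * φ = 0) (heqN : wN * ∑ j, μ j * x j + aN * φ = 0) :
    φ = 0 := by
  have hx : ∀ j, x j = -(a j / w j) * φ := fun j => by
    field_simp [hw j]
    linear_combination heq j
  have hsum : ∑ j, μ j * x j = -(∑ j, μ j * (a j / w j)) * φ := by
    simp only [hx, Finset.sum_mul, ← Finset.sum_neg_distrib]
    exact Finset.sum_congr rfl fun j _ => by ring
  have hprod : (aN / wN - ∑ j, μ j * (a j / w j)) * φ = 0 := by
    rw [hsum] at heqN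
    refine mul_left_cancel₀ hwN ?_
    linear_combination heqN + φ * div_mul_cancel₀ aN hwN
  exact (mul_eq_zero.mp hprod).resolve_left (sub_ne_zero.mpr hcond)

theorem Submodule.eq_zero_of_span_range_eq_orthogonal {𝕜 E ι : Type*} [RCLike 𝕜]
    [NormedAddCommGroup E] [InnerProductSpace 𝕜 E] {K : Submodule 𝕜 E}
    [K.HasOrthogonalProjection] {θ : ι → E} (hspan : span 𝕜 (Set.range θ) = Kᗮ) {f : E}
    (hfK : f ∈ Kᗮ) (hfθ : ∀ j, inner 𝕜 f (θ j) = 0) : f = 0 := by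
  have hfθ' : f ∈ (span 𝕜 (Set.range θ))ᗮ :=
    (isOrtho_span.mpr (by simpa using hfθ)).le (mem_span_singleton_self f)
  rw [hspan, orthogonal_orthogonal] at hfθ'
  exact disjoint_def.mp K.orthogonal_disjoint f hfθ' hfK

theorem stmt_7_general (n : ℕ)
    (ξ : EuclideanSpace ℝ (Fin n))
    (θ : Fin (n - 1) → EuclideanSpace ℝ (Fin n))
    (hspan : Submodule.span ℝ (Set.range θ) = (Submodule.span ℝ {ξ})ᗮ)
    (μ : Fin (n - 1) → ℝ)
    (w a : Fin (n - 1) → ℝ) (wN aN : ℝ)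
    (hw : ∀ j, w j ≠ 0) (hwN : wN ≠ 0)
    (hcond : aN / wN ≠ ∑ j, μ j * (a j / w j))
    (f : EuclideanSpace ℝ (Fin n)) (φ : ℝ)
    (hfξ : ⟪f, ξ⟫ = 0)
    (heq : ∀ j, w j * ⟪f, θ j⟫ + a j * φ = 0)
    (heqN : wN * ⟪f, ∑ j, μ j • θ j⟫ + aN * φ = 0) :
    f = 0 ∧ φ = 0 := by
  have hφ : φ = 0 := eq_zero_of_forall_mul_add_mul_eq_zero hw hwN hcond heq
    (by simpa only [inner_sum, real_inner_smul_right] using heqN)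
  have hfθ : ∀ j, ⟪f, θ j⟫ = 0 := fun j => by simpa [hφ, hw j] using heq j
  exact ⟨Submodule.eq_zero_of_span_range_eq_orthogonal hspan
    (Submodule.mem_orthogonal_singleton_iff_inner_left.mpr hfξ) hfθ, hφ⟩

/-- pointwise ellipticity step in the proof of Proposition 3.5.
Given a basis `θ₁, …, θ_{n-1}` of the hyperplane `ξ^⊥`, a combination
`θₙ = Σ μ_j θ_j`, nonzero weights `w_i` and scalars `a_i` with
`aₙ/wₙ ≠ Σ μ_j a_j/w_j`, the equations `⟨f, ξ⟩ = 0` and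
`w_i ⟨f, θ_i⟩ + a_i φ = 0` (for `i = 1, …, n`) force `f = 0` and `φ = 0`. -/
theorem stmt_7 (n : ℕ) (hn : 2 ≤ n)
    (ξ : EuclideanSpace ℝ (Fin n)) (hξ : ξ ≠ 0)
    (θ : Fin (n - 1) → EuclideanSpace ℝ (Fin n))
    (hindep : LinearIndependent ℝ θ)
    (hspan : Submodule.span ℝ (Set.range θ) = (Submodule.span ℝ {ξ})ᗮ)
    (μ : Fin (n - 1) → ℝ)
    (w a : Fin (n - 1) → ℝ) (wN aN : ℝ)
    (hw : ∀ j, w j ≠ 0) (hwN : wN ≠ 0)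
    (hcond : aN / wN ≠ ∑ j, μ j * (a j / w j))
    (f : EuclideanSpace ℝ (Fin n)) (φ : ℝ)
    (hfξ : ⟪f, ξ⟫ = 0)
    (heq : ∀ j, w j * ⟪f, θ j⟫ + a j * φ = 0)
    (heqN : wN * ⟪f, ∑ j, μ j • θ j⟫ + aN * φ = 0) :
    f = 0 ∧ φ = 0 :=
  stmt_7_general n ξ θ hspan μ w a wN aN hw hwN hcond f φ hfξ heq heqN
end
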